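/- arXiv:1701.04615 — 9 statements merged into one kernel-verified Lean document; each statement's English description precedes it below -/
import Mathlib

section
/- Suppose α ∈ pℤ_p \ {0} satisfies α = (p_n + β p_{n-1})/(q_n + β q_{n-1}) where β ∈ pℤ_p and p_n, q_n are the continued-fraction convergent numerators and denominators. Then |α − p_n/q_n|_p = |β|_p / p^{k_1 + ⋯ + k_n}. -/
/-- Theorem 3.5(i): if `α = (p_n + β p_{n-1})/(q_n + β q_{n-1})` with `β ∈ pℤ_p`, then
`|α − p_n/q_n|_p = |β|_p / p^{k_1 + ⋯ + k_n}` (here `P (n+1)` is `p_n`, `Q (n+1)` is `q_n`). -/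
theorem stmt_2 (p : ℕ) [Fact p.Prime]
    (t d : ℕ → ℚ_[p]) (k : ℕ → ℕ)
    (ht : ∀ i, ‖t i‖ = 1) (hd : ∀ i, ‖d i‖ = 1) (hk : ∀ i, 1 ≤ k i)
    (P Q : ℕ → ℚ_[p])
    (hP0 : P 0 = 1) (hP1 : P 1 = 0) (hQ0 : Q 0 = 0) (hQ1 : Q 1 = 1)
    (hPrec : ∀ n, P (n + 2) = d (n + 1) * P (n + 1) + t (n + 1) * (p : ℚ_[p]) ^ (k (n + 1)) * P n)
    (hQrec : ∀ n, Q (n + 2) = d (n + 1) * Q (n + 1) + t (n + 1) * (p : ℚ_[p]) ^ (k (n + 1)) * Q n)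
    (α β : ℚ_[p]) (hα : ‖α‖ ≤ 1 / p) (hα0 : α ≠ 0) (hβ : ‖β‖ ≤ 1 / p)
    (n : ℕ) (hn : 1 ≤ n)
    (hαβ : α = (P (n + 1) + β * P n) / (Q (n + 1) + β * Q n)) :
    ‖α - P (n + 1) / Q (n + 1)‖ = ‖β‖ / (p : ℝ) ^ (∑ i ∈ Finset.Icc 1 n, k i) := by
  have hp : (1:ℝ) < p := Nat.one_lt_cast.2 (Fact.out : p.Prime).one_lt
  have hp0 : (0:ℝ) < p := lt_trans one_pos hp
  -- norms of Q
  have hQnorm : ∀ m, ‖Q (m+1)‖ = 1 ∧ ‖Q m‖ ≤ 1 := by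
    intro m
    induction m with
    | zero => simp [hQ0, hQ1]
    | succ m ih =>
      obtain ⟨h1, h2⟩ := ih
      have hlt : ‖t (m+1) * (p : ℚ_[p]) ^ (k (m+1)) * Q m‖ < ‖d (m+1) * Q (m+1)‖ := by
        have hrhs : ‖d (m+1) * Q (m+1)‖ = 1 := by rw [norm_mul, hd, h1, mul_one]
        rw [hrhs, norm_mul, norm_mul, ht, one_mul]
        calc ‖(p : ℚ_[p]) ^ (k (m+1))‖ * ‖Q m‖ ≤ ‖(p : ℚ_[p]) ^ (k (m+1))‖ * 1 := by
              exact mul_le_mul_of_nonneg_left h2 (norm_nonneg _)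
          _ = ((p:ℝ) ^ (k (m+1)))⁻¹ := by
              rw [mul_one, Padic.norm_p_pow, zpow_neg, zpow_natCast]
          _ < 1 := by
              rw [inv_lt_one_iff₀]
              right
              exact one_lt_pow₀ hp (by have := hk (m+1); omega)
      have : ‖Q (m+2)‖ = ‖d (m+1) * Q (m+1)‖ := by
        rw [hQrec m]
        rw [Padic.add_eq_max_of_ne (ne_of_gt hlt)]
        exact max_eq_left hlt.le
      constructor
      · rw [this, norm_mul, hd, one_mul, h1]
      · exact h1.le
  -- determinant
  have hdet : ∀ m, 1 ≤ m → ‖P (m+1) * Q m - P m * Q (m+1)‖ = ((p:ℝ) ^ (∑ i ∈ Finset.Icc 1 m, k i))⁻¹ := by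
    intro m hm
    induction m with
    | zero => omega
    | succ m ih =>
      rcases Nat.eq_or_lt_of_le hm with h1 | h1
      · -- m + 1 = 1, i.e. m = 0
        have hm0 : m = 0 := by omega
        subst hm0
        have hP2 : P 2 = t 1 * (p : ℚ_[p]) ^ (k 1) := by
          have := hPrec 0; rw [hP1, hP0] at this; simpa using this
        have hQ2 : Q 2 = d 1 := by
          have := hQrec 0; rw [hQ0, hQ1] at this; simpa using this
        rw [show (0:ℕ)+1+1 = 2 by rfl, hP2, hQ2, hP1, hQ1]
        simp only [mul_one, zero_mul, sub_zero]
        rw [norm_mul, ht, one_mul, Padic.norm_p_pow, zpow_neg, zpow_natCast]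
        norm_num
      · have hm1 : 1 ≤ m := by omega
        have key : P (m+2) * Q (m+1) - P (m+1) * Q (m+2)
            = -(t (m+1) * (p : ℚ_[p]) ^ (k (m+1)) * (P (m+1) * Q m - P m * Q (m+1))) := by
          rw [hPrec m, hQrec m]; ring
        rw [key, norm_neg, norm_mul, norm_mul, ht, one_mul, ih hm1,
          Padic.norm_p_pow, zpow_neg, zpow_natCast,
          Finset.sum_Icc_succ_top (by omega : 1 ≤ m + 1), pow_add, mul_inv, mul_comm]
  -- denominators nonzero
  have hQn1 : ‖Q (n+1)‖ = 1 := (hQnorm n).1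
  have hQn1ne : Q (n+1) ≠ 0 := by
    intro h; rw [h, norm_zero] at hQn1; norm_num at hQn1
  have hβQ : ‖β * Q n‖ < ‖Q (n+1)‖ := by
    rw [norm_mul, hQn1]
    calc ‖β‖ * ‖Q n‖ ≤ (1/p) * 1 :=
          mul_le_mul hβ (hQnorm n).2 (norm_nonneg _) (by positivity)
      _ < 1 := by rw [mul_one]; rw [div_lt_one hp0]; exact hp
  have hden : ‖Q (n+1) + β * Q n‖ = 1 := by
    rw [Padic.add_eq_max_of_ne hβQ.ne', max_eq_left hβQ.le, hQn1]
  have hdenne : Q (n+1) + β * Q n ≠ 0 := by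
    intro h; rw [h, norm_zero] at hden; norm_num at hden
  have hdiff : α - P (n+1) / Q (n+1)
      = -(β * (P (n+1) * Q n - P n * Q (n+1))) / (Q (n+1) * (Q (n+1) + β * Q n)) := by
    rw [hαβ]
    field_simp
    ring
  rw [hdiff, norm_div, norm_neg, norm_mul, norm_mul, hQn1, hden, one_mul,
    hdet n hn, div_one, div_eq_mul_inv]
end

section
/- If T^n(α) ≠ 0 for all n ≥ 1, then the convergents p_n/q_n of the p-adic continued fraction expansion of α converge to α in ℚ_p; indeed |α − p_n/q_n|_p = p^{−(k_1 + ⋯ + k_{n+1})} for every n ≥ 1. -/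
/-!
Put `α_n = T^n(α)` and `a_n = t(α_n) p^{v(α_n)}`. The definition of `T` says
`α_n (d(α_n) + α_{n+1}) = a_n`, which is exactly the relation between consecutive complete
quotients of the continued fraction with partial denominators `d(α_n)` and partial numerators
`a_n`. Hence `α (Q_{n+1} + α_n Q_n) = P_{n+1} + α_n P_n`, and

  `α - P_{n+1}/Q_{n+1} = α_n (P_n Q_{n+1} - P_{n+1} Q_n) / ((Q_{n+1} + α_n Q_n) Q_{n+1})`.

The determinant `P_n Q_{n+1} - P_{n+1} Q_n` is `±∏_{i<n} a_i`, and `|a_i| = |α_i|` because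
`|d(α_i) + α_{i+1}| = 1`. The ultrametric inequality gives `|Q_{n+1}| = |Q_{n+1} + α_n Q_n| = 1`,
so `|α - P_{n+1}/Q_{n+1}| = ∏_{i≤n} |α_i| = p^{-(v(α_0) + ⋯ + v(α_n))} ≤ p^{-(n+1)}`.
-/

open Filter Finset Topology

theorem norm_add_eq_left_of_norm_lt {S : Type*} [SeminormedAddGroup S] [IsUltrametricDist S]
    {x y : S} (h : ‖y‖ < ‖x‖) : ‖x + y‖ = ‖x‖ := by
  rw [IsUltrametricDist.norm_add_eq_max_of_norm_ne_norm h.ne', max_eq_left h.le]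

section Continuant

variable {R : Type*} [CommRing R] {A d a P Q : ℕ → R}

theorem continuant_det (hP0 : P 0 = 1) (hP1 : P 1 = 0) (hQ0 : Q 0 = 0) (hQ1 : Q 1 = 1)
    (hPrec : ∀ n, P (n + 2) = d n * P (n + 1) + a n * P n)
    (hQrec : ∀ n, Q (n + 2) = d n * Q (n + 1) + a n * Q n) (n : ℕ) :
    P (n + 1) * Q n - P n * Q (n + 1) = -∏ i ∈ range n, -a i := by
  induction n with
  | zero => simp [hP0, hP1, hQ0, hQ1]
  | succ n ih =>
    rw [prod_range_succ, hPrec, hQrec]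
    linear_combination (-a n) * ih

theorem mul_continuant_add_eq (hkey : ∀ n, A n * (d n + A (n + 1)) = a n)
    (hP0 : P 0 = 1) (hP1 : P 1 = 0) (hQ0 : Q 0 = 0) (hQ1 : Q 1 = 1)
    (hPrec : ∀ n, P (n + 2) = d n * P (n + 1) + a n * P n)
    (hQrec : ∀ n, Q (n + 2) = d n * Q (n + 1) + a n * Q n) (n : ℕ) :
    A 0 * (Q (n + 1) + A n * Q n) = P (n + 1) + A n * P n := by
  induction n with
  | zero => simp [hP0, hP1, hQ0, hQ1]
  | succ n ih =>
    rw [hPrec, hQrec, ← hkey n]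
    linear_combination (d n + A (n + 1)) * ih

end Continuant

section Ultrametric

variable {K : Type*} [NormedField K] [IsUltrametricDist K] {A d a P Q : ℕ → K}

theorem norm_continuant_succ_eq_one (hd : ∀ n, ‖d n‖ = 1) (ha : ∀ n, ‖a n‖ < 1)
    (hQ0 : Q 0 = 0) (hQ1 : Q 1 = 1)
    (hQrec : ∀ n, Q (n + 2) = d n * Q (n + 1) + a n * Q n) (n : ℕ) :
    ‖Q (n + 1)‖ = 1 := by
  suffices ∀ n, ‖Q (n + 1)‖ = 1 ∧ ‖Q n‖ ≤ 1 from (this n).1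
  intro n
  induction n with
  | zero => simp [hQ0, hQ1]
  | succ n ih =>
    have hlead : ‖d n * Q (n + 1)‖ = 1 := by rw [norm_mul, hd, ih.1, one_mul]
    have htail : ‖a n * Q n‖ < 1 := by
      rw [norm_mul]
      exact mul_lt_one_of_nonneg_of_lt_one_left (norm_nonneg _) (ha n) ih.2
    refine ⟨?_, ih.1.le⟩
    rw [hQrec, norm_add_eq_left_of_norm_lt (hlead ▸ htail), hlead]

theorem norm_sub_convergent_eq_prod (hA : ∀ n, ‖A n‖ < 1) (hd : ∀ n, ‖d n‖ = 1)
    (hkey : ∀ n, A n * (d n + A (n + 1)) = a n)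
    (hP0 : P 0 = 1) (hP1 : P 1 = 0) (hQ0 : Q 0 = 0) (hQ1 : Q 1 = 1)
    (hPrec : ∀ n, P (n + 2) = d n * P (n + 1) + a n * P n)
    (hQrec : ∀ n, Q (n + 2) = d n * Q (n + 1) + a n * Q n) (n : ℕ) :
    ‖A 0 - P (n + 1) / Q (n + 1)‖ = ∏ i ∈ range (n + 1), ‖A i‖ := by
  have hnorm_a : ∀ n, ‖a n‖ = ‖A n‖ := fun n => by
    rw [← hkey, norm_mul, norm_add_eq_left_of_norm_lt ((hA _).trans_eq (hd n).symm), hd, mul_one]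
  have hQ := norm_continuant_succ_eq_one hd (fun n => (hnorm_a n).trans_lt (hA n)) hQ0 hQ1 hQrec
  have hQ_le : ‖Q n‖ ≤ 1 := by
    cases n with
    | zero => simp [hQ0]
    | succ n => exact (hQ n).le
  have hden : ‖Q (n + 1) + A n * Q n‖ = 1 := by
    have hsmall : ‖A n * Q n‖ < ‖Q (n + 1)‖ := by
      rw [hQ, norm_mul]
      exact mul_lt_one_of_nonneg_of_lt_one_left (norm_nonneg _) (hA n) hQ_le
    rw [norm_add_eq_left_of_norm_lt hsmall, hQ]
  have herr : A 0 - P (n + 1) / Q (n + 1) =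
      A n * (P n * Q (n + 1) - P (n + 1) * Q n) / ((Q (n + 1) + A n * Q n) * Q (n + 1)) := by
    have hQ_ne : Q (n + 1) ≠ 0 := norm_ne_zero_iff.mp (by simp [hQ])
    have hden_ne : Q (n + 1) + A n * Q n ≠ 0 := norm_ne_zero_iff.mp (by simp [hden])
    field_simp
    linear_combination Q (n + 1) * mul_continuant_add_eq hkey hP0 hP1 hQ0 hQ1 hPrec hQrec n
  rw [herr, norm_div, norm_mul, norm_mul, hden, hQ, ← neg_sub,
    continuant_det hP0 hP1 hQ0 hQ1 hPrec hQrec, neg_neg, norm_prod, prod_range_succ]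
  simp [hnorm_a, mul_comm]

theorem tendsto_convergents {r : ℝ} (hA : ∀ n, ‖A n‖ ≤ r) (hr : r < 1) (hd : ∀ n, ‖d n‖ = 1)
    (hkey : ∀ n, A n * (d n + A (n + 1)) = a n)
    (hP0 : P 0 = 1) (hP1 : P 1 = 0) (hQ0 : Q 0 = 0) (hQ1 : Q 1 = 1)
    (hPrec : ∀ n, P (n + 2) = d n * P (n + 1) + a n * P n)
    (hQrec : ∀ n, Q (n + 2) = d n * Q (n + 1) + a n * Q n) :
    Tendsto (fun n => P (n + 1) / Q (n + 1)) atTop (𝓝 (A 0)) := by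
  have hr0 : 0 ≤ r := (norm_nonneg _).trans (hA 0)
  have hbound (n : ℕ) : ‖P (n + 1) / Q (n + 1) - A 0‖ ≤ r ^ (n + 1) := by
    rw [norm_sub_rev, norm_sub_convergent_eq_prod (fun n => (hA n).trans_lt hr) hd hkey
      hP0 hP1 hQ0 hQ1 hPrec hQrec]
    calc ∏ i ∈ range (n + 1), ‖A i‖ ≤ ∏ _i ∈ range (n + 1), r :=
          prod_le_prod (fun _ _ => norm_nonneg _) (fun i _ => hA i)
      _ = r ^ (n + 1) := by simp
  rw [tendsto_iff_norm_sub_tendsto_zero]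
  exact squeeze_zero (fun _ => norm_nonneg _) hbound
    ((tendsto_pow_atTop_nhds_zero_of_lt_one hr0 hr).comp (tendsto_add_atTop_nat 1))

end Ultrametric

theorem Padic.prod_range_norm_eq_zpow_neg_sum_valuation {p : ℕ} [Fact p.Prime] {x : ℕ → ℚ_[p]}
    (hx : ∀ i, x i ≠ 0) (n : ℕ) :
    ∏ i ∈ range n, ‖x i‖ = (p : ℝ) ^ (-∑ i ∈ range n, (x i).valuation) := by
  induction n with
  | zero => simp
  | succ n ih =>
    have hp : (p : ℝ) ≠ 0 := by exact_mod_cast (Fact.out : p.Prime).ne_zero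
    rw [prod_range_succ, sum_range_succ, ih, Padic.norm_eq_zpow_neg_valuation (hx n), neg_add,
      zpow_add₀ hp]

theorem stmt_3_general (p : ℕ) [Fact p.Prime]
    (t d T : ℚ_[p] → ℚ_[p])
    (hd : ∀ x, x ≠ 0 → ‖x‖ ≤ 1 / p → ‖d x‖ = 1)
    (hT : ∀ x, x ≠ 0 → ‖x‖ ≤ 1 / p →
      T x = t x * (p : ℚ_[p]) ^ x.valuation / x - d x)
    (hTmem : ∀ x, x ≠ 0 → ‖x‖ ≤ 1 / p → ‖T x‖ ≤ 1 / p)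
    (α : ℚ_[p]) (hα : ‖α‖ ≤ 1 / p)
    (hnz : ∀ n, T^[n] α ≠ 0)
    (P Q : ℕ → ℚ_[p])
    (hP0 : P 0 = 1) (hP1 : P 1 = 0) (hQ0 : Q 0 = 0) (hQ1 : Q 1 = 1)
    (hPrec : ∀ n, P (n + 2) =
      d (T^[n] α) * P (n + 1) + t (T^[n] α) * (p : ℚ_[p]) ^ (T^[n] α).valuation * P n)
    (hQrec : ∀ n, Q (n + 2) =
      d (T^[n] α) * Q (n + 1) + t (T^[n] α) * (p : ℚ_[p]) ^ (T^[n] α).valuation * Q n) :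
    Filter.Tendsto (fun n => P (n + 1) / Q (n + 1)) Filter.atTop (nhds α) ∧
    ∀ n, 1 ≤ n →
      ‖α - P (n + 1) / Q (n + 1)‖ =
        (p : ℝ) ^ (-(∑ i ∈ Finset.range (n + 1), (T^[i] α).valuation)) := by
  have hp : (1 : ℝ) / p < 1 := by
    have : (1 : ℝ) < p := by exact_mod_cast (Fact.out : p.Prime).one_lt
    rwa [div_lt_one (by linarith)]
  have horbit : ∀ n, ‖T^[n] α‖ ≤ 1 / p := by
    intro n
    induction n with
    | zero => exact hα
    | succ n ih => rw [Function.iterate_succ_apply']; exact hTmem _ (hnz n) ih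
  have hd_orbit : ∀ n, ‖d (T^[n] α)‖ = 1 := fun n => hd _ (hnz n) (horbit n)
  have hkey : ∀ n, T^[n] α * (d (T^[n] α) + T^[n + 1] α) =
      t (T^[n] α) * (p : ℚ_[p]) ^ (T^[n] α).valuation := fun n => by
    rw [Function.iterate_succ_apply', hT _ (hnz n) (horbit n)]
    field_simp [hnz n]
    ring
  refine ⟨tendsto_convergents horbit hp hd_orbit hkey hP0 hP1 hQ0 hQ1 hPrec hQrec, fun n _ => ?_⟩
  rw [← Padic.prod_range_norm_eq_zpow_neg_sum_valuation hnz]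
  exact norm_sub_convergent_eq_prod (fun n => (horbit n).trans_lt hp) hd_orbit hkey
    hP0 hP1 hQ0 hQ1 hPrec hQrec n

/-- Theorem 3.5(ii): if `T^n(α) ≠ 0` for all `n`, then the convergents `p_n/q_n` of the
p-adic continued fraction of `α` converge to `α`; indeed
`|α − p_n/q_n|_p = p^{−(k_1 + ⋯ + k_{n+1})}` for `n ≥ 1`, where `k_i = v_p(T^{i-1}(α))`
(here `P (n+1)` is `p_n` and `Q (n+1)` is `q_n`). -/
theorem stmt_3 (p : ℕ) [Fact p.Prime]
    (t d T : ℚ_[p] → ℚ_[p])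
    (ht : ∀ x, x ≠ 0 → ‖x‖ ≤ 1 / p → ‖t x‖ = 1)
    (hd : ∀ x, x ≠ 0 → ‖x‖ ≤ 1 / p → ‖d x‖ = 1)
    (hT : ∀ x, x ≠ 0 → ‖x‖ ≤ 1 / p →
      T x = t x * (p : ℚ_[p]) ^ x.valuation / x - d x)
    (hTmem : ∀ x, x ≠ 0 → ‖x‖ ≤ 1 / p → ‖T x‖ ≤ 1 / p)
    (α : ℚ_[p]) (hα : ‖α‖ ≤ 1 / p) (hα0 : α ≠ 0)
    (hnz : ∀ n, T^[n] α ≠ 0)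
    (P Q : ℕ → ℚ_[p])
    (hP0 : P 0 = 1) (hP1 : P 1 = 0) (hQ0 : Q 0 = 0) (hQ1 : Q 1 = 1)
    (hPrec : ∀ n, P (n + 2) =
      d (T^[n] α) * P (n + 1) + t (T^[n] α) * (p : ℚ_[p]) ^ (T^[n] α).valuation * P n)
    (hQrec : ∀ n, Q (n + 2) =
      d (T^[n] α) * Q (n + 1) + t (T^[n] α) * (p : ℚ_[p]) ^ (T^[n] α).valuation * Q n) :
    Filter.Tendsto (fun n => P (n + 1) / Q (n + 1)) Filter.atTop (nhds α) ∧
    ∀ n, 1 ≤ n →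
      ‖α - P (n + 1) / Q (n + 1)‖ =
        (p : ℝ) ^ (-(∑ i ∈ Finset.range (n + 1), (T^[i] α).valuation)) :=
  stmt_3_general p t d T hd hT hTmem α hα hnz P Q hP0 hP1 hQ0 hQ1 hPrec hQrec
end

section
/- Let α ∈ pℤ_p be a quadratic Hensel root with minimal polynomial X² + bX + c, and let r ∈ {1,…,p−1} with r ≡ b (mod p). Then −c/α − r ∈ pℤ_p and it is a root of X² + (−b + 2r)X + (−rb + c + r²), whose middle coefficient is not divisible by p and constant term is divisible by p; hence −c/α − r is again a quadratic Hensel root. -/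
open Polynomial

/-- Lemma 4.2 for `T₂`: if `α ∈ pℤ_p` is a quadratic Hensel root of the irreducible
`X² + bX + c` (`b ∉ pℤ`, `c ∈ pℤ`) and `r ∈ {1,…,p−1}` with `r ≡ b (mod p)`, then
`−c/α − r ∈ pℤ_p`, and it is a root of `X² + (−b + 2r)X + (−rb + c + r²)`, whose middle
coefficient is not divisible by `p` and whose constant term is divisible by `p`; this
polynomial is irreducible, so `−c/α − r` is again a quadratic Hensel root. -/
theorem stmt_6 (p : ℕ) [Fact p.Prime] (b c r : ℤ)
    (hb : ¬ (p : ℤ) ∣ b) (hc : (p : ℤ) ∣ c)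
    (hr1 : 1 ≤ r) (hr2 : r ≤ (p : ℤ) - 1) (hrb : r ≡ b [ZMOD p])
    (hirr : Irreducible (X ^ 2 + C b * X + C c : ℤ[X]))
    (α : ℚ_[p]) (hα : ‖α‖ ≤ 1 / p)
    (hroot : α ^ 2 + b * α + c = 0) :
    ‖-(c : ℚ_[p]) / α - (r : ℚ_[p])‖ ≤ 1 / p ∧
    (-(c : ℚ_[p]) / α - (r : ℚ_[p])) ^ 2
      + ((-b + 2 * r : ℤ) : ℚ_[p]) * (-(c : ℚ_[p]) / α - (r : ℚ_[p]))
      + ((-r * b + c + r ^ 2 : ℤ) : ℚ_[p]) = 0 ∧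
    ¬ (p : ℤ) ∣ (-b + 2 * r) ∧
    (p : ℤ) ∣ (-r * b + c + r ^ 2) ∧
    Irreducible (X ^ 2 + C (-b + 2 * r) * X + C (-r * b + c + r ^ 2) : ℤ[X]) := by
  have hp : p.Prime := Fact.out
  have hdbr : (p : ℤ) ∣ b - r := hrb.dvd
  -- α ≠ 0
  have hα0 : α ≠ 0 := by
    intro h
    have hc0 : (c : ℚ_[p]) = 0 := by simpa [h] using hroot
    have hc0' : c = 0 := by exact_mod_cast hc0
    subst hc0'
    have : (X ^ 2 + C b * X + C 0 : ℤ[X]) = X * (X + C b) := by rw [C_0]; ring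
    rw [this] at hirr
    rcases hirr.isUnit_or_isUnit rfl with hu | hu
    · exact (Polynomial.not_isUnit_X) hu
    · exact one_ne_zero ((Polynomial.natDegree_X_add_C b).symm.trans
        (Polynomial.natDegree_eq_zero_of_isUnit hu))
  -- key identity
  have key : -(c : ℚ_[p]) / α = α + (b : ℚ_[p]) := by
    rw [div_eq_iff hα0]
    linear_combination -hroot
  have hβ : -(c : ℚ_[p]) / α - (r : ℚ_[p]) = α + ((b - r : ℤ) : ℚ_[p]) := by
    push_cast
    rw [key]; ring
  refine ⟨?_, ?_, ?_, ?_, ?_⟩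
  · rw [hβ]
    have hbr : ‖((b - r : ℤ) : ℚ_[p])‖ ≤ 1 / p := by
      have := (Padic.norm_int_le_pow_iff_dvd (b - r) 1).2 (by simpa using hdbr)
      simpa [zpow_neg, zpow_one, one_div] using this
    calc ‖α + ((b - r : ℤ) : ℚ_[p])‖ ≤ max ‖α‖ ‖((b - r : ℤ) : ℚ_[p])‖ :=
          Padic.nonarchimedean _ _
      _ ≤ 1 / p := max_le hα hbr
  · rw [hβ]
    push_cast
    linear_combination hroot
  · intro h
    obtain ⟨m, hm⟩ := hdbr
    obtain ⟨n, hn⟩ := h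
    exact hb ⟨2 * m + n, by linear_combination 2 * hm + hn⟩
  · obtain ⟨k, hk⟩ := hc
    obtain ⟨m, hm⟩ := hdbr
    exact ⟨k - r * m, by linear_combination hk - r * hm⟩
  · have hcomp : (X ^ 2 + C (-b + 2 * r) * X + C (-r * b + c + r ^ 2) : ℤ[X]) =
        (algEquivAevalXAddC (r - b)) (X ^ 2 + C b * X + C c : ℤ[X]) := by
      simp only [algEquivAevalXAddC_apply]
      simp only [map_add, map_mul, map_pow, aeval_X, aeval_C, algebraMap_eq]
      simp only [C_add, C_sub, C_mul, C_neg, C_pow, map_ofNat]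
      ring
    rw [hcomp]
    exact (MulEquiv.irreducible_iff (algEquivAevalXAddC (r - b) : ℤ[X] ≃ₐ[ℤ] ℤ[X])).2 hirr
end

section
/- The map T₂ on pairs (b,c), given by T₂(b,c) = (−b + 2r, −rb + c + r²) with r ∈ {1,…,p−1}, r ≡ b (mod p), is an involution: T₂²(b,c) = (b,c) for every (b,c) with b ∉ pℤ. Consequently every quadratic Hensel root is a purely periodic point of T₂ with period one or two. -/
/-- The map `T₂` of Algorithm A on coefficient pairs `(b,c)`; here
`r = b % p` is the unique element of `{1,…,p−1}` congruent to `b` mod `p`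
(when `p ∤ b`). -/
def algAT2 (p : ℕ) (x : ℤ × ℤ) : ℤ × ℤ :=
  (-x.1 + 2 * (x.1 % (p : ℤ)), -(x.1 % (p : ℤ)) * x.1 + x.2 + (x.1 % (p : ℤ)) ^ 2)

/-- Theorem 6.1: `T₂` is an involution on coefficient pairs `(b,c)` with `b ∉ pℤ`;
consequently every quadratic Hensel root is a purely periodic point of Algorithm A
with period one or two. -/
theorem stmt_8 (p : ℕ) [Fact p.Prime] (b c : ℤ)
    (hb : ¬ (p : ℤ) ∣ b) (hc : (p : ℤ) ∣ c) :
    algAT2 p (algAT2 p (b, c)) = (b, c) ∧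
    ∃ m, 1 ≤ m ∧ m ≤ 2 ∧ (algAT2 p)^[m] (b, c) = (b, c) := by
  have key : (-b + 2 * (b % (p : ℤ))) % (p : ℤ) = b % (p : ℤ) := by
    have hd := Int.emod_add_mul_ediv b (p : ℤ)
    have : -b + 2 * (b % (p : ℤ)) = b % (p : ℤ) + (p : ℤ) * (-(b / (p : ℤ))) := by linarith
    rw [this, Int.add_mul_emod_self_left, Int.emod_emod_of_dvd _ dvd_rfl]
  have h : algAT2 p (algAT2 p (b, c)) = (b, c) := by
    simp only [algAT2, key, Prod.mk.injEq]
    constructor <;> ring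
  refine ⟨h, 2, by norm_num, by norm_num, ?_⟩
  simp [Function.iterate_succ_apply', h]
end

section
/- Let T be the map on coefficient pairs defined by T(b,c) = T₂(b,c) if b ≥ 0 and T(b,c) = T₁(b,c) if b < 0, where T₁(b,c) = (b + 2(p−r), (p−r)b + c + (p−r)²) and T₂(b,c) = (−b + 2r, −rb + c + r²) with r ∈ {1,…,p−1}, r ≡ b (mod p). Then for every (b,c) with b ∉ pℤ and c ∈ pℤ, some iterate T^n(b,c) is a fixed point of T; moreover the fixed points are exactly the pairs with 1 ≤ b ≤ p−1. -/
/-- The map `T₁` on coefficient pairs `(b,c)`, with `r = b % p`. -/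
def algT1 (p : ℕ) (x : ℤ × ℤ) : ℤ × ℤ :=
  (x.1 + 2 * ((p : ℤ) - x.1 % (p : ℤ)),
   ((p : ℤ) - x.1 % (p : ℤ)) * x.1 + x.2 + ((p : ℤ) - x.1 % (p : ℤ)) ^ 2)

/-- The map `T₂` on coefficient pairs `(b,c)`, with `r = b % p`. -/
def algT2 (p : ℕ) (x : ℤ × ℤ) : ℤ × ℤ :=
  (-x.1 + 2 * (x.1 % (p : ℤ)), -(x.1 % (p : ℤ)) * x.1 + x.2 + (x.1 % (p : ℤ)) ^ 2)

/-- The map `T` of Algorithm B on coefficient pairs: `T₂` if `b ≥ 0`, `T₁` if `b < 0`. -/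
def algB (p : ℕ) (x : ℤ × ℤ) : ℤ × ℤ :=
  if 0 ≤ x.1 then algT2 p x else algT1 p x

lemma algB_fix_iff (p : ℕ) (hp : 0 < (p:ℤ)) (b c : ℤ) (hb : ¬ (p:ℤ) ∣ b) :
    algB p (b, c) = (b, c) ↔ 1 ≤ b ∧ b ≤ (p:ℤ) - 1 := by
  have hr0 : 0 ≤ b % p := Int.emod_nonneg b (ne_of_gt hp)
  have hrlt : b % p < p := Int.emod_lt_of_pos b hp
  have hrne : b % p ≠ 0 := fun h => hb (Int.dvd_of_emod_eq_zero h)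
  by_cases hb0 : 0 ≤ b
  · simp only [algB, algT2, hb0, if_pos, Prod.mk.injEq]
    constructor
    · rintro ⟨h1, _⟩
      have hbr : b % p = b := by linarith
      exact ⟨by omega, by linarith⟩
    · rintro ⟨h1, h2⟩
      have hbr : b % p = b := Int.emod_eq_of_lt (by linarith) (by linarith)
      rw [hbr]
      constructor <;> ring
  · simp only [algB, algT1, hb0, if_neg, Prod.mk.injEq, not_false_iff]
    constructor
    · rintro ⟨h1, _⟩
      exfalso; linarith
    · rintro ⟨h1, _⟩
      exfalso; omega

lemma algB_exists_fix (p : ℕ) (hp : 0 < (p:ℤ)) :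
    ∀ N (b c : ℤ), b.natAbs ≤ N → ¬ (p:ℤ) ∣ b →
      ∃ n, algB p ((algB p)^[n] (b, c)) = (algB p)^[n] (b, c) := by
  intro N
  induction N with
  | zero =>
      intro b c hN hb
      have hb0 : b = 0 := Int.natAbs_eq_zero.mp (Nat.le_zero.mp hN)
      exact absurd (hb0 ▸ dvd_zero (p:ℤ)) hb
  | succ N ih =>
      intro b c hN hb
      by_cases hfix : 1 ≤ b ∧ b ≤ (p:ℤ) - 1
      · exact ⟨0, by simpa using (algB_fix_iff p hp b c hb).2 hfix⟩
      have hr0 : 0 ≤ b % p := Int.emod_nonneg b (ne_of_gt hp)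
      have hrlt : b % p < p := Int.emod_lt_of_pos b hp
      have hrne : b % p ≠ 0 := fun h => hb (Int.dvd_of_emod_eq_zero h)
      have hdvd : (p:ℤ) ∣ b - b % p := ⟨b / p, by have := Int.mul_ediv_add_emod b p; linarith⟩
      have hrdvd : ¬ (p:ℤ) ∣ b % p := by
        intro h
        have := Int.le_of_dvd (by omega) h
        omega
      by_cases hb0 : 0 ≤ b
      · -- here b ≥ p
        have hbp : (p:ℤ) ≤ b := by
          by_contra hlt
          push_neg at hlt
          refine hfix ⟨?_, by omega⟩
          rcases hb0.lt_or_eq with h | h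
          · omega
          · exact absurd (h ▸ dvd_zero (p:ℤ) : (p:ℤ) ∣ b) hb
        have hstep : algB p (b, c)
            = (-b + 2 * (b % p), -(b % p) * b + c + (b % p) ^ 2) := by
          simp [algB, algT2, hb0]
        have hb' : ¬ (p:ℤ) ∣ -b + 2 * (b % p) := by
          intro h
          apply hrdvd
          have h2 := dvd_add h hdvd
          have h3 : -b + 2 * (b % p) + (b - b % p) = b % p := by ring
          rwa [h3] at h2
        have hlt : (-b + 2 * (b % p)).natAbs ≤ N := by omega
        obtain ⟨n, hn⟩ := ih _ (-(b % p) * b + c + (b % p) ^ 2) hlt hb'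
        exact ⟨n + 1, by rw [Function.iterate_succ_apply, hstep]; exact hn⟩
      · obtain ⟨k, hk⟩ := hdvd
        have hkneg : k < 0 := by nlinarith
        by_cases hk1 : k = -1
        · -- b = r - p, next step is fixed
          have hbval : b = b % p - p := by rw [hk1] at hk; linarith
          have hstep : algB p (b, c)
              = ((p:ℤ) - b % p, ((p:ℤ) - b % p) * b + c + ((p:ℤ) - b % p) ^ 2) := by
            simp only [algB, algT1, hb0, if_neg, not_false_iff, Prod.mk.injEq]
            exact ⟨by omega, trivial⟩
          have hb' : ¬ (p:ℤ) ∣ (p:ℤ) - b % p := by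
            intro h
            have := Int.le_of_dvd (by omega) h
            omega
          refine ⟨1, ?_⟩
          rw [Function.iterate_one, hstep]
          exact (algB_fix_iff p hp _ _ hb').2 ⟨by omega, by omega⟩
        · have hk2 : k ≤ -2 := by omega
          have hble : b - b % p ≤ -2 * p := by nlinarith
          have hstep : algB p (b, c)
              = (b + 2 * ((p:ℤ) - b % p),
                 ((p:ℤ) - b % p) * b + c + ((p:ℤ) - b % p) ^ 2) := by
            simp [algB, algT1, hb0]
          have hb' : ¬ (p:ℤ) ∣ b + 2 * ((p:ℤ) - b % p) := by
            intro h
            apply hrdvd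
            have h2 : (p:ℤ) ∣ b + 2 * ((p:ℤ) - b % p) - (b - b % p) - 2 * p :=
              dvd_sub (dvd_sub h ⟨k, hk⟩) ⟨2, by ring⟩
            have h3 : b + 2 * ((p:ℤ) - b % p) - (b - b % p) - 2 * p = -(b % p) := by ring
            rw [h3] at h2
            exact (dvd_neg).mp h2
          have hlt : (b + 2 * ((p:ℤ) - b % p)).natAbs ≤ N := by omega
          obtain ⟨n, hn⟩ := ih _ (((p:ℤ) - b % p) * b + c + ((p:ℤ) - b % p) ^ 2) hlt hb'
          exact ⟨n + 1, by rw [Function.iterate_succ_apply, hstep]; exact hn⟩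

/-- Theorem 6.3: for every `(b,c)` with `b ∉ pℤ`, `c ∈ pℤ`, some iterate of the
Algorithm B map `T` is a fixed point of `T`; moreover the fixed points among such
pairs are exactly those with `1 ≤ b ≤ p − 1`. -/
theorem stmt_10 (p : ℕ) [Fact p.Prime] (b c : ℤ)
    (hb : ¬ (p : ℤ) ∣ b) (hc : (p : ℤ) ∣ c) :
    (∃ n, algB p ((algB p)^[n] (b, c)) = (algB p)^[n] (b, c)) ∧
    (∀ b' c' : ℤ, ¬ (p : ℤ) ∣ b' → (p : ℤ) ∣ c' →
      (algB p (b', c') = (b', c') ↔ (1 ≤ b' ∧ b' ≤ (p : ℤ) - 1))) := by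
  have hp : 0 < (p:ℤ) := by exact_mod_cast (Fact.out : p.Prime).pos
  exact ⟨algB_exists_fix p hp b.natAbs b c le_rfl hb,
    fun b' c' hb' _ => algB_fix_iff p hp b' c' hb'⟩
end

section
/- Let r ∈ {1,…,p−1}, c₀ ∈ pℤ, and let T₁ be the map T₁(b,c) = (b + 2(p−r'), (p−r')b + c + (p−r')²) where r' ∈ {1,…,p−1}, r' ≡ b (mod p). Then for all integers k ≥ 0: T₁^{2k}(r, c₀) = (2pk + r, p²k² + rpk + c₀) and T₁^{2k+1}(r, c₀) = (2p(k+1) − r, p²(k+1)² − rp(k+1) + c₀). -/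
/-- Explicit formulas for the iterates of `T₁` starting from `(r, c₀)` with
`r ∈ {1,…,p−1}` and `c₀ ∈ pℤ`:
`T₁^{2k}(r,c₀) = (2pk + r, p²k² + rpk + c₀)` and
`T₁^{2k+1}(r,c₀) = (2p(k+1) − r, p²(k+1)² − rp(k+1) + c₀)`. -/
theorem stmt_13 (p : ℕ) [Fact p.Prime] (r c₀ : ℤ)
    (hr1 : 1 ≤ r) (hr2 : r ≤ (p : ℤ) - 1) (hc : (p : ℤ) ∣ c₀) :
    ∀ k : ℕ,
      (algT1 p)^[2 * k] (r, c₀) =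
        (2 * (p : ℤ) * k + r, (p : ℤ) ^ 2 * (k : ℤ) ^ 2 + r * p * k + c₀) ∧
      (algT1 p)^[2 * k + 1] (r, c₀) =
        (2 * (p : ℤ) * ((k : ℤ) + 1) - r,
         (p : ℤ) ^ 2 * ((k : ℤ) + 1) ^ 2 - r * p * ((k : ℤ) + 1) + c₀) := by
  have hmod1 : ∀ m : ℤ, (2 * (p : ℤ) * m + r) % p = r := by
    intro m
    have : 2 * (p : ℤ) * m + r = r + (p : ℤ) * (2 * m) := by ring
    rw [this, Int.add_mul_emod_self_left, Int.emod_eq_of_lt (by linarith) (by linarith)]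
  have hmod2 : ∀ m : ℤ, (2 * (p : ℤ) * m - r) % p = (p : ℤ) - r := by
    intro m
    have : 2 * (p : ℤ) * m - r = ((p : ℤ) - r) + (p : ℤ) * (2 * m - 1) := by ring
    rw [this, Int.add_mul_emod_self_left, Int.emod_eq_of_lt (by linarith) (by linarith)]
  intro k
  induction k with
  | zero =>
    constructor
    · simp
    · simp only [mul_zero, zero_add, Function.iterate_one, algT1]
      rw [show ((r, c₀) : ℤ × ℤ).1 % (p:ℤ) = r from
        Int.emod_eq_of_lt (by linarith) (by linarith), Prod.mk.injEq]
      push_cast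
      constructor <;> ring
  | succ n ih =>
    obtain ⟨ihe, iho⟩ := ih
    have heven : (algT1 p)^[2 * (n + 1)] (r, c₀) =
        (2 * (p : ℤ) * ((n : ℤ) + 1) + r,
         (p : ℤ) ^ 2 * ((n : ℤ) + 1) ^ 2 + r * p * ((n : ℤ) + 1) + c₀) := by
      have h2 : 2 * (n + 1) = (2 * n + 1) + 1 := by ring
      rw [h2, Function.iterate_succ_apply', iho, algT1]
      simp only
      rw [hmod2 ((n : ℤ) + 1), Prod.mk.injEq]
      constructor <;> ring
    refine ⟨heven, ?_⟩
    rw [Function.iterate_succ_apply', heven, algT1]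
    simp only
    rw [hmod1 ((n : ℤ) + 1), Prod.mk.injEq]
    push_cast
    constructor <;> ring
end

section
/- Let α ∈ ℚ_p be quadratic over ℚ with conjugate α^σ, with minimal polynomial aX² + bX + c ∈ ℤ[X] (a > 0, coefficients coprime). If |α|_p < |α^σ|_p and |α|_p ≤ 1/p, then |α^σ|_p = |b/a|_p, |α|_p = |c/b|_p, and |ac/b²|_p < 1; moreover c|b|_p/α is a root of X² + b|b|_p X + ac|b|²_p ∈ ℤ[X], whose middle coefficient is a p-adic unit integer and whose constant term is divisible by p. -/
open Polynomial

/-- Case 1A of Section 7: let `α ∈ ℚ_p` be quadratic over `ℚ` with minimal polynomial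
`aX² + bX + c ∈ ℤ[X]` (`a > 0`, coefficients coprime) and conjugate `α^σ ≠ α`.
If `|α|_p < |α^σ|_p` and `|α|_p ≤ 1/p`, then `|α^σ|_p = |b/a|_p`, `|α|_p = |c/b|_p`,
`|ac/b²|_p < 1`, and `c|b|_p/α` is a root of `X² + b|b|_p X + ac|b|²_p`, whose middle
coefficient has p-adic absolute value 1 and whose constant term is divisible by `p`. -/
theorem stmt_15 (p : ℕ) [Fact p.Prime] (a b c : ℤ) (ha : 0 < a)
    (hcop : Int.gcd (Int.gcd a b) c = 1)
    (hirr : Irreducible (C a * X ^ 2 + C b * X + C c : ℤ[X]))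
    (α ασ : ℚ_[p])
    (hroot : (a : ℚ_[p]) * α ^ 2 + b * α + c = 0)
    (hrootσ : (a : ℚ_[p]) * ασ ^ 2 + b * ασ + c = 0)
    (hne : ασ ≠ α)
    (hlt : ‖α‖ < ‖ασ‖) (hα : ‖α‖ ≤ 1 / p) :
    ‖ασ‖ = ‖(b : ℚ_[p]) / (a : ℚ_[p])‖ ∧
    ‖α‖ = ‖(c : ℚ_[p]) / (b : ℚ_[p])‖ ∧
    ‖(a : ℚ_[p]) * (c : ℚ_[p]) / (b : ℚ_[p]) ^ 2‖ < 1 ∧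
    ((c : ℚ_[p]) * (p : ℚ_[p]) ^ (-(b : ℚ_[p]).valuation) / α) ^ 2
      + ((b : ℚ_[p]) * (p : ℚ_[p]) ^ (-(b : ℚ_[p]).valuation))
        * ((c : ℚ_[p]) * (p : ℚ_[p]) ^ (-(b : ℚ_[p]).valuation) / α)
      + (a : ℚ_[p]) * (c : ℚ_[p]) * (p : ℚ_[p]) ^ (-2 * (b : ℚ_[p]).valuation) = 0 ∧
    ‖(b : ℚ_[p]) * (p : ℚ_[p]) ^ (-(b : ℚ_[p]).valuation)‖ = 1 ∧
    ‖(a : ℚ_[p]) * (c : ℚ_[p]) * (p : ℚ_[p]) ^ (-2 * (b : ℚ_[p]).valuation)‖ ≤ 1 / p := by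
  have hp1 : (1:ℝ) < p := Nat.one_lt_cast.mpr (Fact.out (p := p.Prime)).one_lt
  have hp0 : (0:ℝ) < p := lt_trans one_pos hp1
  have hpp : ((p:ℚ_[p])) ≠ 0 := Nat.cast_ne_zero.mpr (Fact.out (p := p.Prime)).ne_zero
  have haQ : (a : ℚ_[p]) ≠ 0 := Int.cast_ne_zero.mpr ha.ne'
  -- c ≠ 0
  have hc0 : c ≠ 0 := by
    intro h
    subst h
    have hfac : (C a * X ^ 2 + C b * X + C 0 : ℤ[X]) = X * (C a * X + C b) := by
      rw [C_0, add_zero]; ring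
    rcases hirr.isUnit_or_isUnit hfac with h1 | h1
    · have := natDegree_eq_zero_of_isUnit h1
      simp [natDegree_X] at this
    · have := natDegree_eq_zero_of_isUnit h1
      rw [natDegree_linear ha.ne'] at this
      exact one_ne_zero this
  have hcQ : (c : ℚ_[p]) ≠ 0 := Int.cast_ne_zero.mpr hc0
  -- Vieta
  have hsum : (a : ℚ_[p]) * (α + ασ) = -b := by
    have hd : (α - ασ) * ((a:ℚ_[p]) * (α + ασ) + b) = 0 := by
      linear_combination hroot - hrootσ
    rcases mul_eq_zero.mp hd with h | h
    · exact absurd (sub_eq_zero.mp h).symm hne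
    · linear_combination h
  have hprod : (a : ℚ_[p]) * α * ασ = c := by
    linear_combination α * hsum - hroot
  have hσ0 : ασ ≠ 0 := by
    intro h; rw [h, norm_zero] at hlt; exact absurd hlt (not_lt.mpr (norm_nonneg _))
  have hα0 : α ≠ 0 := by
    intro h; rw [h] at hprod; simp at hprod; exact hcQ hprod.symm
  -- norms
  have hb_norm : ‖(b:ℚ_[p])‖ = ‖(a:ℚ_[p])‖ * ‖ασ‖ := by
    have : ‖α + ασ‖ = max ‖α‖ ‖ασ‖ := Padic.add_eq_max_of_ne hlt.ne
    calc ‖(b:ℚ_[p])‖ = ‖(a:ℚ_[p]) * (α + ασ)‖ := by rw [hsum, norm_neg]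
    _ = ‖(a:ℚ_[p])‖ * ‖ασ‖ := by rw [norm_mul, this, max_eq_right hlt.le]
  have hc_norm : ‖(c:ℚ_[p])‖ = ‖(a:ℚ_[p])‖ * ‖α‖ * ‖ασ‖ := by
    rw [← hprod, norm_mul, norm_mul]
  have hbQ : (b : ℚ_[p]) ≠ 0 := by
    intro h
    rw [h, norm_zero] at hb_norm
    rcases mul_eq_zero.mp hb_norm.symm with h' | h'
    · exact haQ (norm_eq_zero.mp h')
    · exact hσ0 (norm_eq_zero.mp h')
  have haN : ‖(a:ℚ_[p])‖ ≠ 0 := norm_ne_zero_iff.mpr haQ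
  have hbN : ‖(b:ℚ_[p])‖ ≠ 0 := norm_ne_zero_iff.mpr hbQ
  have hσN : ‖ασ‖ ≠ 0 := norm_ne_zero_iff.mpr hσ0
  have hαN : ‖α‖ ≠ 0 := norm_ne_zero_iff.mpr hα0
  have g1 : ‖ασ‖ = ‖(b : ℚ_[p]) / (a : ℚ_[p])‖ := by
    rw [norm_div, hb_norm]; field_simp
  have g2 : ‖α‖ = ‖(c : ℚ_[p]) / (b : ℚ_[p])‖ := by
    rw [norm_div, hc_norm, hb_norm]; field_simp
  have hacb : ‖(a : ℚ_[p]) * (c : ℚ_[p]) / (b : ℚ_[p]) ^ 2‖ = ‖α‖ / ‖ασ‖ := by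
    rw [norm_div, norm_mul, norm_pow, hc_norm, hb_norm]
    field_simp
  have g3 : ‖(a : ℚ_[p]) * (c : ℚ_[p]) / (b : ℚ_[p]) ^ 2‖ < 1 := by
    rw [hacb]
    exact (div_lt_one (lt_of_le_of_lt (norm_nonneg _) hlt)).mpr hlt
  -- the root equation
  set v : ℤ := (b : ℚ_[p]).valuation with hv
  have hz : ((p:ℚ_[p]) ^ (-v)) ≠ 0 := zpow_ne_zero _ hpp
  have g4 : ((c : ℚ_[p]) * (p : ℚ_[p]) ^ (-v) / α) ^ 2
      + ((b : ℚ_[p]) * (p : ℚ_[p]) ^ (-v))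
        * ((c : ℚ_[p]) * (p : ℚ_[p]) ^ (-v) / α)
      + (a : ℚ_[p]) * (c : ℚ_[p]) * (p : ℚ_[p]) ^ (-2 * v) = 0 := by
    have h2 : (p : ℚ_[p]) ^ (-2 * v) = ((p:ℚ_[p]) ^ (-v)) ^ 2 := by
      rw [← zpow_natCast ((p:ℚ_[p]) ^ (-v)) 2, ← zpow_mul]
      norm_num
      ring_nf
    rw [h2]
    set t := (p:ℚ_[p]) ^ (-v) with ht
    have key : ((c:ℚ_[p]) * t / α) ^ 2 + ((b:ℚ_[p]) * t) * ((c:ℚ_[p]) * t / α)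
        + (a:ℚ_[p]) * c * t ^ 2
        = ((c:ℚ_[p]) * t ^ 2 / α ^ 2) * ((a:ℚ_[p]) * α ^ 2 + b * α + c) := by
      field_simp
      ring
    rw [key, hroot, mul_zero]
  -- norm of b * p^{-v}
  have hbval : ‖(b:ℚ_[p])‖ = (p:ℝ) ^ (-v) := Padic.norm_eq_zpow_neg_valuation hbQ
  have hpz : ∀ n : ℤ, ‖(p : ℚ_[p]) ^ n‖ = (p:ℝ) ^ (-n) := Padic.norm_p_zpow
  have g5 : ‖(b : ℚ_[p]) * (p : ℚ_[p]) ^ (-v)‖ = 1 := by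
    rw [norm_mul, hbval, hpz, neg_neg, ← zpow_add₀ (ne_of_gt hp0)]
    simp
  -- last bound
  have hαval : ‖α‖ = (p:ℝ) ^ (-α.valuation) := Padic.norm_eq_zpow_neg_valuation hα0
  have hσval : ‖ασ‖ = (p:ℝ) ^ (-ασ.valuation) := Padic.norm_eq_zpow_neg_valuation hσ0
  have hvlt : ασ.valuation < α.valuation := by
    rw [hαval, hσval] at hlt
    have := (zpow_lt_zpow_iff_right₀ hp1).mp hlt
    omega
  have g6 : ‖(a : ℚ_[p]) * (c : ℚ_[p]) * (p : ℚ_[p]) ^ (-2 * v)‖ ≤ 1 / p := by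
    have heq : ‖(a : ℚ_[p]) * (c : ℚ_[p]) * (p : ℚ_[p]) ^ (-2 * v)‖
        = ‖(a : ℚ_[p]) * (c : ℚ_[p]) / (b : ℚ_[p]) ^ 2‖ := by
      have h2v : -(-2 * v) = v * 2 := by ring
      rw [norm_mul, norm_div, norm_pow, hbval, hpz, h2v,
        ← zpow_natCast ((p:ℝ) ^ (-v)) 2, ← zpow_mul, div_eq_mul_inv, ← zpow_neg]
      ring_nf
    rw [heq, hacb, hαval, hσval, div_eq_mul_inv, ← zpow_neg, ← zpow_add₀ (ne_of_gt hp0)]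
    have : (1:ℝ)/p = (p:ℝ) ^ (-1 : ℤ) := by simp
    rw [this]
    apply (zpow_le_zpow_iff_right₀ hp1).mpr
    omega
  exact ⟨g1, g2, g3, g4, g5, g6⟩
end

section
/- Let α = −c/b ∈ ℚ be rational with b ∈ ℤ \ pℤ, c ∈ pℤ, b, c coprime, c ≠ 0. Then u(α) p^{v_p(α)}/α = −b, where u(α) = c'|c'|_p for the constant term c' of the minimal polynomial bX + c of α; consequently T₁(α) and T₂(α) both lie in pℤ ⊂ ℚ, i.e., they are rational Hensel roots. -/
/-!
Since `p ∤ b`, the unit `b` does not change valuations, so `α = -c/b` has the same valuation as `c`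
(and as `-c`). The two powers of `p` therefore cancel and what is left is `c / (-c/b) = -b`.
For the digits, `p ∤ ±b` makes the least nonnegative residue of `±b` modulo `p` nonzero.
-/

namespace Int

lemma nonzero_digit_emod_of_not_dvd {m n : ℤ} (hm : 0 < m) (h : ¬ m ∣ n) :
    1 ≤ n % m ∧ n % m ≤ m - 1 ∧ m ∣ n - n % m := by
  have hne : n % m ≠ 0 := fun h0 => h (dvd_of_emod_eq_zero h0)
  have := emod_nonneg n hm.ne'
  have := emod_lt_of_pos n hm
  exact ⟨by omega, by omega, dvd_self_sub_emod⟩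

end Int

namespace Padic

variable {p : ℕ} [Fact p.Prime]

lemma valuation_neg (x : ℚ_[p]) : (-x).valuation = x.valuation := by
  obtain rfl | hx := eq_or_ne x 0
  · simp
  have hneg : -x = ((-1 : ℤ) : ℚ_[p]) * x := by push_cast; ring
  rw [hneg, valuation_mul (by norm_num) hx, valuation_intCast]
  simp [Int.natCast_dvd, (Fact.out : p.Prime).ne_one]

lemma valuation_intCast_of_not_dvd {b : ℤ} (hb : ¬ (p : ℤ) ∣ b) : (b : ℚ_[p]).valuation = 0 := by
  rw [valuation_intCast, padicValInt.eq_zero_of_not_dvd hb, Nat.cast_zero]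

lemma valuation_div_intCast_of_not_dvd (x : ℚ_[p]) {b : ℤ} (hb : ¬ (p : ℤ) ∣ b) :
    (x / b).valuation = x.valuation := by
  obtain rfl | hx := eq_or_ne x 0
  · simp
  have hb0 : (b : ℚ_[p]) ≠ 0 := Int.cast_ne_zero.mpr fun h0 => hb (h0 ▸ dvd_zero _)
  rw [div_eq_mul_inv, valuation_mul hx (inv_ne_zero hb0), valuation_inv,
    valuation_intCast_of_not_dvd hb, neg_zero, add_zero]

end Padic

theorem stmt_17_general (p : ℕ) [Fact p.Prime] (b c : ℤ)
    (hb : ¬ (p : ℤ) ∣ b) (hc0 : c ≠ 0) :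
    (c : ℚ_[p]) * (p : ℚ_[p]) ^ (-(c : ℚ_[p]).valuation)
        * (p : ℚ_[p]) ^ ((-(c : ℚ_[p]) / (b : ℚ_[p])).valuation)
        / (-(c : ℚ_[p]) / (b : ℚ_[p])) = (-b : ℤ) ∧
    (1 ≤ (-b) % (p : ℤ) ∧ (-b) % (p : ℤ) ≤ (p : ℤ) - 1 ∧
      (p : ℤ) ∣ (-b - (-b) % (p : ℤ))) ∧
    (1 ≤ b % (p : ℤ) ∧ b % (p : ℤ) ≤ (p : ℤ) - 1 ∧
      (p : ℤ) ∣ (b - b % (p : ℤ))) := by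
  have hp : (0 : ℤ) < p := by exact_mod_cast (Fact.out : p.Prime).pos
  have hpQ : (p : ℚ_[p]) ≠ 0 := by exact_mod_cast (Fact.out : p.Prime).ne_zero
  have hbQ : (b : ℚ_[p]) ≠ 0 := Int.cast_ne_zero.mpr fun h0 => hb (h0 ▸ dvd_zero _)
  have hcQ : (c : ℚ_[p]) ≠ 0 := Int.cast_ne_zero.mpr hc0
  refine ⟨?_, Int.nonzero_digit_emod_of_not_dvd hp (by rwa [Int.dvd_neg]),
    Int.nonzero_digit_emod_of_not_dvd hp hb⟩
  rw [Padic.valuation_div_intCast_of_not_dvd _ hb, Padic.valuation_neg, mul_assoc,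
    ← zpow_add₀ hpQ, neg_add_cancel, zpow_zero, mul_one]
  push_cast
  field_simp

/-- Section 9, Case A: let `α = −c/b ∈ pℤ_p ∩ ℚ` with minimal polynomial `bX + c`
(`b ∈ ℤ \ pℤ`, `c ∈ pℤ`, `b, c` coprime, `b > 0`, `c ≠ 0`). Then
`u(α) p^{v_p(α)}/α = −b` where `u(α) = c|c|_p`; consequently, for the digits
`d₁ = (−b) % p` and `d₂ = b % p` in `{1,…,p−1}`, both `T₁(α) = −b − d₁` and
`T₂(α) = b − d₂` lie in `pℤ ⊆ ℚ`, i.e. they are rational Hensel roots. -/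
theorem stmt_17 (p : ℕ) [Fact p.Prime] (b c : ℤ)
    (hb : ¬ (p : ℤ) ∣ b) (hbpos : 0 < b) (hc : (p : ℤ) ∣ c) (hc0 : c ≠ 0)
    (hcop : Int.gcd b c = 1) :
    (c : ℚ_[p]) * (p : ℚ_[p]) ^ (-(c : ℚ_[p]).valuation)
        * (p : ℚ_[p]) ^ ((-(c : ℚ_[p]) / (b : ℚ_[p])).valuation)
        / (-(c : ℚ_[p]) / (b : ℚ_[p])) = (-b : ℤ) ∧
    (1 ≤ (-b) % (p : ℤ) ∧ (-b) % (p : ℤ) ≤ (p : ℤ) - 1 ∧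
      (p : ℤ) ∣ (-b - (-b) % (p : ℤ))) ∧
    (1 ≤ b % (p : ℤ) ∧ b % (p : ℤ) ≤ (p : ℤ) - 1 ∧
      (p : ℤ) ∣ (b - b % (p : ℤ))) :=
  stmt_17_general p b c hb hc0
end

section
/- Let α ∈ pℤ_p \ {0} be quadratic over ℚ with |α|_p = |α^σ|_p, and let (ε_n) be any sequence in {1,2}. Then there exists n ≥ 1 such that the iterate α_n = T_{ε_n} ∘ ⋯ ∘ T_{ε_1}(α) satisfies |α_n|_p ≠ |α_n^σ|_p (assuming all iterates are nonzero). -/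
/-- Case 3A of Section 7: let `α ∈ pℤ_p \ {0}` be quadratic over `ℚ` with conjugate
`α^σ ≠ α` and `|α|_p = |α^σ|_p`, and let `(ε_n)` be any sequence of signs choosing
between `T₁` and `T₂`. The sequence of iterates `A n = T_{ε_n} ∘ ⋯ ∘ T_{ε_1}(α)`
satisfies the recursion `A (n+1) = ε_n u_n p^{v_p(A n)}/A n − d_n` with
`‖u_n‖ = ‖d_n‖ = 1`, and the conjugate iterates `Aσ n` satisfy the same recursion with
`A n` replaced by `Aσ n` (same exponent `v_p(A n)`). Then, assuming all iterates are
nonzero, there exists `n ≥ 1` with `|A n|_p ≠ |Aσ n|_p`. -/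
theorem stmt_19 (p : ℕ) [Fact p.Prime]
    (A Aσ : ℕ → ℚ_[p]) (u d : ℕ → ℚ_[p]) (ε : ℕ → ℤ)
    (hε : ∀ n, ε n = 1 ∨ ε n = -1)
    (hu : ∀ n, ‖u n‖ = 1) (hd : ∀ n, ‖d n‖ = 1)
    (hA0 : ∀ n, A n ≠ 0) (hAσ0 : ∀ n, Aσ n ≠ 0)
    (hAnorm : ∀ n, ‖A n‖ ≤ 1 / p)
    (hrecA : ∀ n, A (n + 1) =
      (ε n : ℚ_[p]) * u n * (p : ℚ_[p]) ^ ((A n).valuation) / A n - d n)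
    (hrecAσ : ∀ n, Aσ (n + 1) =
      (ε n : ℚ_[p]) * u n * (p : ℚ_[p]) ^ ((A n).valuation) / Aσ n - d n)
    (hne : A 0 ≠ Aσ 0) (hstart : ‖A 0‖ = ‖Aσ 0‖) :
    ∃ n, 1 ≤ n ∧ ‖A n‖ ≠ ‖Aσ n‖ := by

  by_contra hcon
  push_neg at hcon
  have heq : ∀ n, ‖A n‖ = ‖Aσ n‖ := by
    intro n
    cases n with
    | zero => exact hstart
    | succ m => exact hcon (m+1) (Nat.le_add_left 1 m)
  have hp1 : (1:ℝ) < p := by exact_mod_cast (Fact.out : p.Prime).one_lt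
  have hp0 : (0:ℝ) < p := lt_trans one_pos hp1
  have hApos : ∀ n, (0:ℝ) < ‖A n‖ := fun n => norm_pos_iff.mpr (hA0 n)
  have hεnorm : ∀ n, ‖(ε n : ℚ_[p])‖ = 1 := by
    intro n; rcases hε n with h | h <;> simp [h]
  have hpnorm : ∀ n, ‖(p:ℚ_[p]) ^ (A n).valuation‖ = ‖A n‖ := by
    intro n
    rw [Padic.norm_eq_zpow_neg_valuation (hA0 n), Padic.norm_p_zpow]
  have hdiff : ∀ n, A (n+1) - Aσ (n+1) =
      (ε n : ℚ_[p]) * u n * (p:ℚ_[p]) ^ (A n).valuation * (Aσ n - A n) / (A n * Aσ n) := by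
    intro n
    rw [hrecA n, hrecAσ n, sub_sub_sub_cancel_right,
      div_sub_div _ _ (hA0 n) (hAσ0 n)]
    congr 1
    ring
  have hstep : ∀ n, ‖A (n+1) - Aσ (n+1)‖ = ‖A n - Aσ n‖ / ‖A n‖ := by
    intro n
    rw [hdiff n, norm_div, norm_mul, norm_mul, norm_mul, hεnorm, hu, hpnorm,
      norm_mul, ← heq n, norm_sub_rev]
    have h0 : ‖A n‖ ≠ 0 := ne_of_gt (hApos n)
    field_simp
  have hgrow : ∀ n, (p:ℝ)^n * ‖A 0 - Aσ 0‖ ≤ ‖A n - Aσ n‖ := by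
    intro n
    induction n with
    | zero => simp
    | succ m ih =>
      rw [hstep m]
      have hAle : ‖A m‖ ≤ 1 / p := hAnorm m
      have h1 : (p:ℝ) * ‖A m - Aσ m‖ ≤ ‖A m - Aσ m‖ / ‖A m‖ := by
        rw [le_div_iff₀ (hApos m)]
        have : (p:ℝ) * ‖A m - Aσ m‖ * ‖A m‖ ≤ (p:ℝ) * ‖A m - Aσ m‖ * (1/p) := by
          apply mul_le_mul_of_nonneg_left hAle
          positivity
        calc (p:ℝ) * ‖A m - Aσ m‖ * ‖A m‖ ≤ (p:ℝ) * ‖A m - Aσ m‖ * (1/p) := this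
          _ = ‖A m - Aσ m‖ := by field_simp
      calc (p:ℝ)^(m+1) * ‖A 0 - Aσ 0‖ = (p:ℝ) * ((p:ℝ)^m * ‖A 0 - Aσ 0‖) := by ring
        _ ≤ (p:ℝ) * ‖A m - Aσ m‖ := by
            apply mul_le_mul_of_nonneg_left ih (le_of_lt hp0)
        _ ≤ ‖A m - Aσ m‖ / ‖A m‖ := h1
  have hc : (0:ℝ) < ‖A 0 - Aσ 0‖ := norm_pos_iff.mpr (sub_ne_zero.mpr hne)
  obtain ⟨n, hn⟩ := pow_unbounded_of_one_lt (2 / ‖A 0 - Aσ 0‖) hp1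
  have hbig : 2 < ‖A n - Aσ n‖ := by
    have : 2 < (p:ℝ)^n * ‖A 0 - Aσ 0‖ := by
      rw [div_lt_iff₀ hc] at hn; linarith
    linarith [hgrow n]
  have hsmall : ‖A n - Aσ n‖ ≤ 2 := by
    calc ‖A n - Aσ n‖ ≤ ‖A n‖ + ‖Aσ n‖ := norm_sub_le _ _
      _ ≤ 1/p + 1/p := by
          have h2 := hAnorm n
          have h3 : ‖Aσ n‖ ≤ 1/p := (heq n) ▸ h2
          linarith
      _ ≤ 2 := by
          have : (1:ℝ)/p ≤ 1 := by
            rw [div_le_one hp0]; linarith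
          linarith
  linarith
end
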